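/- Let G be a simple graph on [L], let ε be a Dyck path of length 2p with up-step set ε↑, and fix a labelling i : ε↑ → [L]. For v ∈ [L] let c*(v) denote the size of the largest clique of G containing v. Then the number of closed paths e = w₀, ..., w_{2p} = e in the Cayley graph of the trace monoid T(G) with step profile ε and with w_k = i(k)·w_{k-1} for all k ∈ ε↑ is at most the product over k ∈ ε↑ of c*(i(k)). In particular it is at most ω(G)^p, where ω(G) is the clique number of G. -/

import Mathlib

/-!
Weight a trace `x` by `Φ(x) = ∏ c*(b)` over its letters `b`, counted with multiplicity, and
count paths from an arbitrary `x` to the empty trace by peeling off the first step. An up step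
by `a` multiplies `Φ` by `c*(a)`. A down step from `x` goes to `b⁻¹x` for a letter `b` that
left-divides `x`; two non-commuting letters cannot both be first in a trace, so these letters
form a clique `D(x)`, whence `c*(b) ≥ #D(x)` and
`∑_{b ∈ D(x)} Φ(b⁻¹x) = ∑_b Φ(x) / c*(b) ≤ Φ(x)`. By induction the number of paths from `x`
is at most `Φ(x) ∏_{up steps a} c*(a)`, and `Φ(e) = 1`.
Left cancellation, needed for `b⁻¹x` to be well defined, holds because erasing the first
occurrence of a letter respects the commutation relations.
-/

def traceRel {V : Type*} (G : SimpleGraph V) :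
    FreeMonoid V → FreeMonoid V → Prop := fun a b =>
  ∃ u v, G.Adj u v ∧ a = FreeMonoid.of u * FreeMonoid.of v ∧
    b = FreeMonoid.of v * FreeMonoid.of u

def traceCon {V : Type*} (G : SimpleGraph V) : Con (FreeMonoid V) :=
  conGen (traceRel G)

abbrev TraceMonoid {V : Type*} (G : SimpleGraph V) := (traceCon G).Quotient

def tmOf {V : Type*} (G : SimpleGraph V) (v : V) : TraceMonoid G :=
  ((FreeMonoid.of v : FreeMonoid V) : (traceCon G).Quotient)

theorem traceCon_length {V : Type*} {G : SimpleGraph V} :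
    ∀ a b, (traceCon G) a b → a.length = b.length := by
  intro a b h
  induction h with
  | of a b h =>
      obtain ⟨u, v, _, ha, hb⟩ := h
      subst ha; subst hb; simp
  | refl => rfl
  | symm _ ih => omega
  | trans _ _ ih1 ih2 => omega
  | mul _ _ ih1 ih2 => simpa [FreeMonoid.length_mul] using by omega

/-- The (well-defined) length of an element of the trace monoid. -/
def tlen {V : Type*} {G : SimpleGraph V} (w : TraceMonoid G) : ℕ :=
  Con.liftOn w FreeMonoid.length (fun a b h => traceCon_length a b h)

/-- Adjacency in the Cayley graph of the trace monoid. -/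
def CayleyAdj {V : Type*} (G : SimpleGraph V) (w₁ w₂ : TraceMonoid G) : Prop :=
  ∃ v : V, w₁ = tmOf G v * w₂ ∨ w₂ = tmOf G v * w₁

/-- Closed paths of length `2p` at the empty word whose step profile is the Dyck path
`ε` and whose up step at time `k ∈ ε↑` adds the prescribed letter `i k`. -/
def LabeledPaths {L : ℕ} (G : SimpleGraph (Fin L)) (p : ℕ) (ε : ℕ → ℤ)
    (i : Fin (2 * p) → Fin L) : Type _ :=
  {w : Fin (2 * p + 1) → TraceMonoid G //
    w 0 = 1 ∧ w (Fin.last (2 * p)) = 1 ∧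
    (∀ k : Fin (2 * p), CayleyAdj G (w k.castSucc) (w k.succ)) ∧
    (∀ k : Fin (2 * p), (ε k = 1 ↔ tlen (w k.castSucc) < tlen (w k.succ))) ∧
    (∀ k : Fin (2 * p), ε k = 1 → w k.succ = tmOf G (i k) * w k.castSucc)}

/-- `ε` is a Dyck path of length `2p`. -/
def IsDyckPath (p : ℕ) (ε : ℕ → ℤ) : Prop :=
  (∀ k < 2 * p, ε k = 1 ∨ ε k = -1) ∧
  (∀ m : ℕ, m ≤ 2 * p → 0 ≤ ∑ k ∈ Finset.range m, ε k) ∧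
  ∑ k ∈ Finset.range (2 * p), ε k = 0

/-- The clique number of a graph. -/
noncomputable def cliqueNum {V : Type*} (G : SimpleGraph V) : ℕ :=
  sSup {n | ∃ s : Finset V, G.IsNClique n s}

/-- `c*(v)`: the size of the largest clique of `G` containing `v`. -/
noncomputable def cStar {V : Type*} (G : SimpleGraph V) (v : V) : ℕ :=
  sSup {n | ∃ s : Finset V, G.IsNClique n s ∧ v ∈ s}

lemma Finset.sum_le_of_forall_mul_card_le {ι : Type*} {s : Finset ι} {f : ι → ℕ} {n : ℕ}
    (h : ∀ i ∈ s, f i * s.card ≤ n) : ∑ i ∈ s, f i ≤ n := by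
  rcases s.eq_empty_or_nonempty with rfl | hs
  · simp
  calc ∑ i ∈ s, f i ≤ s.card • (n / s.card) :=
        s.sum_le_card_nsmul f _ fun i hi ↦ (Nat.le_div_iff_mul_le hs.card_pos).mpr (h i hi)
    _ ≤ n := Nat.mul_div_le n s.card

section Cliques

variable {V : Type*} [Fintype V] {G : SimpleGraph V}

lemma bddAbove_setOf_isNClique : BddAbove {n | ∃ s : Finset V, G.IsNClique n s} :=
  ⟨Fintype.card V, by rintro _ ⟨s, hs⟩; exact hs.card_eq ▸ s.card_le_univ⟩

lemma card_le_cStar {s : Finset V} {v : V} (hs : G.IsClique (s : Set V)) (hv : v ∈ s) :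
    s.card ≤ cStar G v :=
  le_csSup (bddAbove_setOf_isNClique.mono <| by rintro _ ⟨t, ht, -⟩; exact ⟨t, ht⟩)
    ⟨s, ⟨hs, rfl⟩, hv⟩

lemma cStar_le_cliqueNum (v : V) : cStar G v ≤ cliqueNum G :=
  csSup_le ⟨1, {v}, ⟨by simp, by simp⟩, by simp⟩ fun _ ⟨s, hs, _⟩ ↦
    le_csSup bddAbove_setOf_isNClique ⟨s, hs⟩

end Cliques

namespace TraceMonoid

variable {V : Type*} {G : SimpleGraph V}

lemma perm_of_traceCon {r s : FreeMonoid V} (h : traceCon G r s) :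
    r.toList.Perm s.toList := by
  induction h with
  | of r s h =>
    obtain ⟨u, v, -, rfl, rfl⟩ := h
    exact .swap v u []
  | refl => rfl
  | symm _ ih => exact ih.symm
  | trans _ _ ih₁ ih₂ => exact ih₁.trans ih₂
  | mul _ _ ih₁ ih₂ => simpa only [FreeMonoid.toList_mul] using ih₁.append ih₂

def letters (x : TraceMonoid G) : Multiset V :=
  Con.liftOn x (fun l ↦ (l.toList : Multiset V))
    fun _ _ h ↦ Multiset.coe_eq_coe.mpr (perm_of_traceCon h)

@[simp]
lemma letters_one : letters (1 : TraceMonoid G) = 0 := rfl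

lemma letters_tmOf_mul (v : V) (x : TraceMonoid G) :
    letters (tmOf G v * x) = v ::ₘ letters x := by
  induction x using Con.induction_on with
  | _ l => exact congrArg ((↑) : List V → Multiset V) (FreeMonoid.toList_of_mul v l)

lemma tlen_tmOf_mul (v : V) (x : TraceMonoid G) : tlen (tmOf G v * x) = tlen x + 1 := by
  induction x using Con.induction_on with
  | _ l => exact (FreeMonoid.length_mul _ _).trans (Nat.add_comm _ _)

lemma traceCon_erase [DecidableEq V] (v : V) {r s : FreeMonoid V} (h : traceCon G r s) :
    traceCon G (.ofList (r.toList.erase v)) (.ofList (s.toList.erase v)) := by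
  induction h with
  | of r s h =>
    obtain ⟨a, b, hab, rfl, rfl⟩ := h
    by_cases ha : a = v
    · subst ha; simpa [hab.ne.symm] using (traceCon G).refl _
    by_cases hb : b = v
    · subst hb; simpa [hab.ne] using (traceCon G).refl _
    · have hswap : traceCon G (.of a * .of b) (.of b * .of a) :=
        ConGen.Rel.of _ _ ⟨a, b, hab, rfl, rfl⟩
      simpa [ha, hb] using hswap
  | refl => exact (traceCon G).refl _
  | symm _ ih => exact (traceCon G).symm ih
  | trans _ _ ih₁ ih₂ => exact (traceCon G).trans ih₁ ih₂
  | mul h₁ h₂ ih₁ ih₂ =>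
    simp only [FreeMonoid.toList_mul, List.erase_append, (perm_of_traceCon h₁).mem_iff]
    split_ifs
    · simpa only [FreeMonoid.ofList_append, FreeMonoid.ofList_toList]
        using (traceCon G).mul ih₁ h₂
    · simpa only [FreeMonoid.ofList_append, FreeMonoid.ofList_toList]
        using (traceCon G).mul h₁ ih₂

lemma tmOf_mul_left_cancel {v : V} {x y : TraceMonoid G} (h : tmOf G v * x = tmOf G v * y) :
    x = y := by
  classical
  induction x using Con.induction_on with | _ l =>
  induction y using Con.induction_on with | _ m =>
  have := traceCon_erase v ((Con.eq _).mp h)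
  simpa [FreeMonoid.toList_of_mul] using (Con.eq _).mpr this

def pairProj [DecidableEq V] (a c : V) : FreeMonoid V →* FreeMonoid V :=
  FreeMonoid.lift fun x ↦ if x = a ∨ x = c then .of x else 1

lemma traceCon_le_ker_pairProj [DecidableEq V] {a c : V} (h : ¬G.Adj a c) :
    traceCon G ≤ Con.ker (pairProj a c) := by
  refine Con.conGen_le.mpr ?_
  rintro _ _ ⟨u, v, huv, rfl, rfl⟩
  by_cases hu : u = a ∨ u = c <;> by_cases hv : v = a ∨ v = c
  · exfalso
    rcases hu with rfl | rfl <;> rcases hv with rfl | rfl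
    exacts [huv.ne rfl, h huv, h huv.symm, huv.ne rfl]
  all_goals simp [pairProj, hu, hv]

lemma adj_of_tmOf_mul_eq {b b' : V} {y y' : TraceMonoid G}
    (h : tmOf G b * y = tmOf G b' * y') (hne : b ≠ b') : G.Adj b b' := by
  classical
  by_contra hadj
  induction y using Con.induction_on with | _ l =>
  induction y' using Con.induction_on with | _ m =>
  have := traceCon_le_ker_pairProj hadj ((Con.eq _).mp h)
  simp only [Con.ker_rel, map_mul, pairProj, FreeMonoid.lift_eval_of, true_or, or_true,
    if_true] at this
  exact hne (List.cons.inj (congrArg FreeMonoid.toList this)).1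

open Classical in
noncomputable def leftDivisors [Fintype V] (x : TraceMonoid G) : Finset V :=
  {b | ∃ y, x = tmOf G b * y}

lemma mem_leftDivisors [Fintype V] {x : TraceMonoid G} {b : V} :
    b ∈ leftDivisors x ↔ ∃ y, x = tmOf G b * y := by
  simp [leftDivisors]

lemma isClique_leftDivisors [Fintype V] (x : TraceMonoid G) :
    G.IsClique (leftDivisors x : Set V) := by
  intro b hb b' hb' hne
  obtain ⟨y, rfl⟩ := mem_leftDivisors.mp hb
  obtain ⟨y', hy'⟩ := mem_leftDivisors.mp hb'
  exact adj_of_tmOf_mul_eq hy' hne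

open Classical in
/-- `b⁻¹x`, with junk value `x` when `b` does not left-divide `x`. -/
noncomputable def leftQuot (x : TraceMonoid G) (b : V) : TraceMonoid G :=
  if h : ∃ y, x = tmOf G b * y then h.choose else x

@[simp]
lemma leftQuot_tmOf_mul (b : V) (y : TraceMonoid G) : leftQuot (tmOf G b * y) b = y := by
  have h : ∃ y', tmOf G b * y = tmOf G b * y' := ⟨y, rfl⟩
  rw [leftQuot, dif_pos h]
  exact (tmOf_mul_left_cancel h.choose_spec).symm

/-- `Φ(x)` of the proof sketch. -/
noncomputable def cliqueWeight (x : TraceMonoid G) : ℕ :=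
  ((letters x).map (cStar G)).prod

@[simp]
lemma cliqueWeight_one : cliqueWeight (1 : TraceMonoid G) = 1 := by
  simp [cliqueWeight]

@[simp]
lemma cliqueWeight_tmOf_mul (b : V) (y : TraceMonoid G) :
    cliqueWeight (tmOf G b * y) = cStar G b * cliqueWeight y := by
  simp [cliqueWeight, letters_tmOf_mul]

lemma sum_cliqueWeight_leftQuot_le [Fintype V] (x : TraceMonoid G) :
    ∑ b ∈ leftDivisors x, cliqueWeight (leftQuot x b) ≤ cliqueWeight x := by
  refine Finset.sum_le_of_forall_mul_card_le fun b hb ↦ ?_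
  obtain ⟨y, rfl⟩ := mem_leftDivisors.mp hb
  rw [leftQuot_tmOf_mul, cliqueWeight_tmOf_mul, mul_comm (cStar G b)]
  exact Nat.mul_le_mul_left _ (card_le_cStar (isClique_leftDivisors _) hb)

/-- `some a` is the up step `y ↦ a y`, `none` a down step `b y ↦ y`. -/
def IsStep (G : SimpleGraph V) : Option V → TraceMonoid G → TraceMonoid G → Prop
  | some a, y, z => z = tmOf G a * y
  | none, y, z => ∃ b, y = tmOf G b * z

def StepPaths (G : SimpleGraph V) {n : ℕ} (s : Fin n → Option V) (x : TraceMonoid G) :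
    Type _ :=
  {w : Fin (n + 1) → TraceMonoid G //
    w 0 = x ∧ w (Fin.last n) = 1 ∧ ∀ k, IsStep G (s k) (w k.castSucc) (w k.succ)}

noncomputable def stepWeight (G : SimpleGraph V) : Option V → ℕ
  | some a => cStar G a
  | none => 1

open Classical in
noncomputable def nextTraces [Fintype V] : Option V → TraceMonoid G → Finset (TraceMonoid G)
  | some a, x => {tmOf G a * x}
  | none, x => (leftDivisors x).image (leftQuot x)

lemma mem_nextTraces [Fintype V] {o : Option V} {x y : TraceMonoid G} (h : IsStep G o x y) :
    y ∈ nextTraces o x := by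
  classical
  cases o with
  | some a => exact Finset.mem_singleton.mpr h
  | none =>
    obtain ⟨b, rfl⟩ := h
    exact Finset.mem_image.mpr ⟨b, mem_leftDivisors.mpr ⟨y, rfl⟩, leftQuot_tmOf_mul b y⟩

lemma sum_nextTraces_cliqueWeight_le [Fintype V] (o : Option V) (x : TraceMonoid G) :
    ∑ y ∈ nextTraces o x, cliqueWeight y ≤ stepWeight G o * cliqueWeight x := by
  cases o with
  | some a => simp [nextTraces, stepWeight]
  | none =>
    classical
    calc ∑ y ∈ nextTraces none x, cliqueWeight y
        ≤ ∑ b ∈ leftDivisors x, cliqueWeight (leftQuot x b) :=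
          Finset.sum_image_le_of_nonneg fun _ _ ↦ Nat.zero_le _
      _ ≤ cliqueWeight x := sum_cliqueWeight_leftQuot_le x
      _ = stepWeight G none * cliqueWeight x := (one_mul _).symm

namespace StepPaths

instance (s : Fin 0 → Option V) (x : TraceMonoid G) :
    Subsingleton (StepPaths G s x) :=
  ⟨fun w w' ↦ Subtype.ext <| funext fun k ↦ by rw [Fin.fin_one_eq_zero k, w.2.1, w'.2.1]⟩

lemma card_le_cliqueWeight_of_length_zero (s : Fin 0 → Option V) (x : TraceMonoid G) :
    Nat.card (StepPaths G s x) ≤ cliqueWeight x := by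
  by_cases hx : x = 1
  · subst hx
    simpa using Finite.card_le_one_iff_subsingleton.mpr inferInstance
  · have : IsEmpty (StepPaths G s x) := ⟨fun w ↦ hx (w.2.1.symm.trans w.2.2.1)⟩
    simp

section Uncons

variable [Fintype V] {n : ℕ} {s : Fin (n + 1) → Option V} {x : TraceMonoid G}

noncomputable def uncons (w : StepPaths G s x) :
    Σ y : nextTraces (s 0) x, StepPaths G (Fin.tail s) y :=
  ⟨⟨w.1 1, mem_nextTraces (w.2.1 ▸ w.2.2.2 0 :)⟩,
    ⟨Fin.tail w.1, rfl, by simpa [Fin.tail] using w.2.2.1,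
      fun k ↦ by simpa [Fin.tail] using w.2.2.2 k.succ⟩⟩

lemma uncons_injective : Function.Injective (uncons (G := G) (s := s) (x := x)) := by
  intro w w' h
  have htail : Fin.tail w.1 = Fin.tail w'.1 := congrArg (fun q ↦ q.2.1) h
  apply Subtype.ext
  rw [← Fin.cons_self_tail w.1, ← Fin.cons_self_tail w'.1, htail, w.2.1, w'.2.1]

end Uncons

instance finite [Fintype V] {n : ℕ} (s : Fin n → Option V) (x : TraceMonoid G) :
    Finite (StepPaths G s x) := by
  induction n generalizing x with
  | zero => infer_instance
  | succ n ih =>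
    have := fun y ↦ ih (Fin.tail s) y
    exact Finite.of_injective _ uncons_injective

lemma card_le_sum_card_tail [Fintype V] {n : ℕ} {s : Fin (n + 1) → Option V}
    {x : TraceMonoid G} :
    Nat.card (StepPaths G s x) ≤
      ∑ y ∈ nextTraces (s 0) x, Nat.card (StepPaths G (Fin.tail s) y) := by
  calc Nat.card (StepPaths G s x)
      ≤ Nat.card (Σ y : nextTraces (s 0) x, StepPaths G (Fin.tail s) y) :=
        Nat.card_le_card_of_injective _ uncons_injective
    _ = _ := Nat.card_sigma.trans <|
        Finset.sum_coe_sort _ fun y ↦ Nat.card (StepPaths G (Fin.tail s) y)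

end StepPaths

theorem card_stepPaths_le [Fintype V] {n : ℕ} (s : Fin n → Option V) (x : TraceMonoid G) :
    Nat.card (StepPaths G s x) ≤ (∏ k, stepWeight G (s k)) * cliqueWeight x := by
  induction n generalizing x with
  | zero => simpa using StepPaths.card_le_cliqueWeight_of_length_zero s x
  | succ n ih =>
    set W := ∏ k, stepWeight G (Fin.tail s k)
    calc Nat.card (StepPaths G s x)
        ≤ ∑ y ∈ nextTraces (s 0) x, Nat.card (StepPaths G (Fin.tail s) y) :=
          StepPaths.card_le_sum_card_tail
      _ ≤ ∑ y ∈ nextTraces (s 0) x, W * cliqueWeight y := Finset.sum_le_sum fun y _ ↦ ih _ y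
      _ = W * ∑ y ∈ nextTraces (s 0) x, cliqueWeight y := (Finset.mul_sum ..).symm
      _ ≤ W * (stepWeight G (s 0) * cliqueWeight x) :=
          Nat.mul_le_mul_left _ (sum_nextTraces_cliqueWeight_le _ _)
      _ = (∏ k, stepWeight G (s k)) * cliqueWeight x := by
          simp only [W, Fin.tail, Fin.prod_univ_succ]
          ring

end TraceMonoid

lemma card_filter_eq_one_of_sum_eq_zero {p : ℕ} {ε : ℕ → ℤ}
    (hε : ∀ k < 2 * p, ε k = 1 ∨ ε k = -1)
    (hsum : ∑ k ∈ Finset.range (2 * p), ε k = 0) :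
    (Finset.univ.filter fun k : Fin (2 * p) ↦ ε k = 1).card = p := by
  have hpm : ∀ k : Fin (2 * p), ε k = 2 * (if ε k = 1 then 1 else 0) - 1 := fun k ↦ by
    rcases hε k k.2 with h | h <;> simp [h]
  rw [← Fin.sum_univ_eq_sum_range, Finset.sum_congr rfl fun k _ ↦ hpm k,
    Finset.sum_sub_distrib, ← Finset.mul_sum, Finset.sum_boole] at hsum
  simp only [Finset.sum_const, Finset.card_univ, Fintype.card_fin, Int.nsmul_eq_mul] at hsum
  omega

namespace LabeledPaths

open TraceMonoid

variable {L p : ℕ} {G : SimpleGraph (Fin L)} {ε : ℕ → ℤ} {i : Fin (2 * p) → Fin L}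

def steps (ε : ℕ → ℤ) (i : Fin (2 * p) → Fin L) (k : Fin (2 * p)) : Option (Fin L) :=
  if ε k = 1 then some (i k) else none

def toStepPaths (w : LabeledPaths G p ε i) : StepPaths G (steps ε i) 1 :=
  ⟨w.1, w.2.1, w.2.2.1, fun k ↦ by
    obtain ⟨-, -, hadj, hprofile, hup⟩ := w.2
    unfold steps
    split_ifs with hk
    · exact hup k hk
    · obtain ⟨v, hv | hv⟩ := hadj k
      · exact ⟨v, hv⟩
      · exact absurd ((hprofile k).mpr (by rw [hv, tlen_tmOf_mul]; omega)) hk⟩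

lemma toStepPaths_injective : Function.Injective (toStepPaths (G := G) (ε := ε) (i := i)) :=
  fun _ _ h ↦ Subtype.ext (congrArg Subtype.val h :)

lemma prod_stepWeight_steps :
    ∏ k, stepWeight G (steps ε i k) =
      ∏ k ∈ Finset.univ.filter (fun k : Fin (2 * p) ↦ ε k = 1), cStar G (i k) := by
  rw [Finset.prod_filter]
  exact Finset.prod_congr rfl fun k _ ↦ by unfold steps; split_ifs <;> rfl

end LabeledPaths

open TraceMonoid LabeledPaths

/-- The number of closed paths at the empty word with Dyck step profile `ε` and
prescribed up-step labels `i` is at most `∏_{k ∈ ε↑} c*(i k)`; in particular it is at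
most `ω(G)^p`. -/
theorem card_labeledPaths_le_prod_cStar {L : ℕ} (G : SimpleGraph (Fin L)) (p : ℕ)
    (ε : ℕ → ℤ) (hε : IsDyckPath p ε) (i : Fin (2 * p) → Fin L) :
    Nat.card (LabeledPaths G p ε i) ≤
      ∏ k ∈ Finset.univ.filter (fun k : Fin (2 * p) => ε k = 1), cStar G (i k) ∧
    Nat.card (LabeledPaths G p ε i) ≤ cliqueNum G ^ p := by
  have hcard : Nat.card (LabeledPaths G p ε i) ≤
      ∏ k ∈ Finset.univ.filter (fun k : Fin (2 * p) => ε k = 1), cStar G (i k) :=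
    calc Nat.card (LabeledPaths G p ε i)
        ≤ Nat.card (StepPaths G (steps ε i) 1) :=
          Nat.card_le_card_of_injective _ toStepPaths_injective
      _ ≤ ∏ k, stepWeight G (steps ε i k) := by simpa using card_stepPaths_le (steps ε i) 1
      _ = _ := prod_stepWeight_steps
  refine ⟨hcard, hcard.trans ?_⟩
  calc ∏ k ∈ Finset.univ.filter (fun k : Fin (2 * p) => ε k = 1), cStar G (i k)
      ≤ ∏ k ∈ Finset.univ.filter (fun k : Fin (2 * p) => ε k = 1), cliqueNum G :=
        Finset.prod_le_prod' fun k _ ↦ cStar_le_cliqueNum (i k)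
    _ = cliqueNum G ^ p := by
        rw [Finset.prod_const, card_filter_eq_one_of_sum_eq_zero hε.1 hε.2.2]
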